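/- Let (s_i)_{i≥1} be i.i.d. real-valued random variables with E[e^{−θ s_1}] < ∞ for a fixed θ > 0, let S(t) = Σ_{i=1}^{t} s_i, and let β(θ) = −(1/θ) log E[e^{−θ S(1)}]. Then for every t ∈ ℕ and every σ ≥ 0, P{ max_{0 ≤ u ≤ t} ( β(θ) u − S(u) ) > σ } ≤ e^{−θ σ}. -/

import Mathlib

/-!
Since `exp (θ β) * E[exp (-θ s₁)] = 1`, the process `M u = exp (θ (β u - S u))` is a product of
independent nonnegative factors of mean one, hence a martingale with `M 0 = 1`. The event is
`{max_{u ≤ t} M u > exp (θ σ)}`, and Doob's maximal inequality bounds its probability by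
`E[M t] / exp (θ σ) = exp (-θ σ)`. Doob's inequality is applied to `u ↦ M (u + 1)`, which is
adapted to the natural filtration of the factors; the index `u = 0` can be dropped because
`β · 0 - S 0 = 0 ≤ σ`.
-/

open MeasureTheory ProbabilityTheory Finset

lemma exists_lt_succ_of_lt_sup'_range {α : Type*} [LinearOrder α] {a : ℕ → α} {σ : α} (h0 : a 0 ≤ σ) {t : ℕ}
    (h : σ < (range (t + 1)).sup' nonempty_range_add_one a) : ∃ k < t, σ < a (k + 1) := by
  obtain ⟨u, hu, hσu⟩ := (lt_sup'_iff _).1 h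
  obtain ⟨k, rfl⟩ : ∃ k, u = k + 1 := Nat.exists_eq_succ_of_ne_zero fun hu0 => by
    subst hu0; exact hσu.not_ge h0
  exact ⟨k, by simpa using hu, hσu⟩

lemma prod_range_exp_mul_sub (θ β : ℝ) (x : ℕ → ℝ) (n : ℕ) :
    ∏ k ∈ range n, Real.exp (θ * (β - x k)) = Real.exp (θ * (β * n - ∑ k ∈ range n, x k)) := by
  rw [← Real.exp_sum, ← mul_sum, sum_sub_distrib, sum_const, card_range, nsmul_eq_mul, mul_comm β]

namespace MeasureTheory

variable {Ω : Type*} {mΩ : MeasurableSpace Ω} {μ : Measure Ω} [IsFiniteMeasure μ]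
  {𝒢 : Filtration ℕ mΩ} {f : ℕ → Ω → ℝ}

lemma Submartingale.measure_le_sup'_le_integral_div (hsub : Submartingale f 𝒢 μ)
    (hnonneg : 0 ≤ f) {ε : ℝ} (hε : 0 < ε) (n : ℕ) :
    μ {ω | ε ≤ (range (n + 1)).sup' nonempty_range_add_one fun k => f k ω} ≤
      ENNReal.ofReal (μ[f n] / ε) := by
  have hdoob := maximal_ineq hsub hnonneg (ε := ε.toNNReal) n
  rw [Real.coe_toNNReal _ hε.le] at hdoob
  rw [ENNReal.ofReal_div_of_pos hε,
    ENNReal.le_div_iff_mul_le (Or.inl (ENNReal.ofReal_pos.2 hε).ne') (Or.inl ENNReal.ofReal_ne_top),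
    mul_comm]
  exact hdoob.trans <| ENNReal.ofReal_le_ofReal <|
    setIntegral_le_integral (hsub.integrable n) (.of_forall (hnonneg n))

end MeasureTheory

namespace ProbabilityTheory

variable {Ω : Type*} {mΩ : MeasurableSpace Ω} {μ : Measure Ω}

section ProductMartingale

variable {Y : ℕ → Ω → ℝ}

lemma iIndepFun.integrable_prod_range (hind : iIndepFun Y μ) (hmeas : ∀ i, Measurable (Y i))
    (hint : ∀ i, Integrable (Y i) μ) (n : ℕ) : Integrable (∏ k ∈ range n, Y k) μ := by
  have := hind.isProbabilityMeasure
  induction n with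
  | zero => exact integrable_const 1
  | succ n ih =>
    rw [prod_range_succ]
    exact (hind.indepFun_prod_range_succ hmeas n).integrable_mul ih (hint n)

lemma iIndepFun.martingale_prod_range_succ (hind : iIndepFun Y μ)
    (hY : ∀ i, StronglyMeasurable (Y i)) (hint : ∀ i, Integrable (Y i) μ)
    (hmean : ∀ i, μ[Y i] = 1) :
    Martingale (fun n => ∏ k ∈ range (n + 1), Y k) (Filtration.natural Y hY) μ := by
  have := hind.isProbabilityMeasure
  have hprod_int n := hind.integrable_prod_range (fun i => (hY i).measurable) hint n
  have hadapted : StronglyAdapted (Filtration.natural Y hY) fun n => ∏ k ∈ range (n + 1), Y k :=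
    fun n => Finset.stronglyMeasurable_prod _ fun k hk =>
      (Filtration.stronglyAdapted_natural hY k).mono
        ((Filtration.natural Y hY).mono (Nat.lt_succ_iff.mp (mem_range.mp hk)))
  refine martingale_nat hadapted (fun n => hprod_int (n + 1)) fun n => ?_
  have hcond : μ[Y (n + 1) | Filtration.natural Y hY n] =ᵐ[μ] fun _ => 1 := by
    simpa only [hmean] using hind.condExp_natural_ae_eq_of_lt hY n.lt_succ_self
  symm
  calc μ[∏ k ∈ range (n + 1 + 1), Y k | Filtration.natural Y hY n]
      = μ[(∏ k ∈ range (n + 1), Y k) * Y (n + 1) | Filtration.natural Y hY n] := by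
        rw [prod_range_succ]
    _ =ᵐ[μ] (∏ k ∈ range (n + 1), Y k) * μ[Y (n + 1) | Filtration.natural Y hY n] :=
        condExp_mul_of_stronglyMeasurable_left (hadapted n)
          (by rw [← prod_range_succ]; exact hprod_int _) (hint _)
    _ =ᵐ[μ] ∏ k ∈ range (n + 1), Y k := by
        filter_upwards [hcond] with ω hω
        simp [hω]

lemma iIndepFun.measure_le_sup'_prod_range_le (hind : iIndepFun Y μ)
    (hmeas : ∀ i, Measurable (Y i)) (hint : ∀ i, Integrable (Y i) μ) (hmean : ∀ i, μ[Y i] = 1)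
    (hnonneg : ∀ i ω, 0 ≤ Y i ω) {ε : ℝ} (hε : 0 < ε) (t : ℕ) :
    μ {ω | ε ≤ (range (t + 1)).sup' nonempty_range_add_one
      fun k => (∏ j ∈ range (k + 1), Y j) ω} ≤ ENNReal.ofReal ε⁻¹ := by
  have := hind.isProbabilityMeasure
  have hmart := hind.martingale_prod_range_succ (fun i => (hmeas i).stronglyMeasurable) hint hmean
  have hmart_mean : μ[∏ j ∈ range (t + 1), Y j] = 1 := by
    rw [← setIntegral_univ, ← hmart.setIntegral_eq t.zero_le MeasurableSet.univ, setIntegral_univ]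
    simpa using hmean 0
  calc _ ≤ _ := hmart.submartingale.measure_le_sup'_le_integral_div
        (fun n ω => by simpa using prod_nonneg fun j _ => hnonneg j ω) hε t
    _ = ENNReal.ofReal ε⁻¹ := by rw [hmart_mean, one_div]

end ProductMartingale

noncomputable def effectiveCapacity (μ : Measure Ω) (X : Ω → ℝ) (θ : ℝ) : ℝ :=
  -(1 / θ) * Real.log (∫ ω, Real.exp (-θ * X ω) ∂μ)

variable {X : Ω → ℝ} {θ : ℝ}

lemma integrable_exp_mul_sub (hX : Integrable (fun ω => Real.exp (-θ * X ω)) μ) (b : ℝ) :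
    Integrable (fun ω => Real.exp (θ * (b - X ω))) μ := by
  simp_rw [mul_sub, sub_eq_add_neg, Real.exp_add, ← neg_mul]
  exact hX.const_mul _

lemma integral_exp_mul_effectiveCapacity_sub [NeZero μ] (hθ : θ ≠ 0)
    (hX : Integrable (fun ω => Real.exp (-θ * X ω)) μ) :
    ∫ ω, Real.exp (θ * (effectiveCapacity μ X θ - X ω)) ∂μ = 1 := by
  simp_rw [mul_sub, sub_eq_add_neg, Real.exp_add, ← neg_mul, integral_const_mul,
    effectiveCapacity, ← mul_assoc, mul_neg, mul_one_div_cancel hθ, neg_one_mul, Real.exp_neg,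
    Real.exp_log (integral_exp_pos hX)]
  exact inv_mul_cancel₀ (integral_exp_pos hX).ne'

end ProbabilityTheory

/-- Maximal inequality for the service process: if `(s i)` are i.i.d. with
`E[exp (−θ s 1)] < ∞` for `θ > 0`, `S t = Σ_{i<t} s i` and
`β = −(1/θ) log E[exp (−θ S 1)]`, then for every `t` and `σ ≥ 0`,
`P{ max_{0 ≤ u ≤ t} (β u − S u) > σ } ≤ exp (−θ σ)`. -/
theorem maximal_inequality_service
    {Ω : Type*} [MeasurableSpace Ω] (μ : Measure Ω) [IsProbabilityMeasure μ]
    (s : ℕ → Ω → ℝ) (hs_meas : ∀ i, Measurable (s i))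
    (hs_indep : iIndepFun s μ)
    (hs_ident : ∀ i, IdentDistrib (s i) (s 0) μ μ)
    (θ : ℝ) (hθ : 0 < θ)
    (hs_int : Integrable (fun ω => Real.exp (-θ * s 0 ω)) μ)
    (S : ℕ → Ω → ℝ) (hS : ∀ t ω, S t ω = ∑ i ∈ Finset.range t, s i ω)
    (β : ℝ) (hβ : β = -(1 / θ) * Real.log (∫ ω, Real.exp (-θ * S 1 ω) ∂μ))
    (t : ℕ) (σ : ℝ) (hσ : 0 ≤ σ) :
    μ {ω | σ < (Finset.range (t + 1)).sup' ⟨0, by simp⟩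
        (fun u => β * u - S u ω)}
      ≤ ENNReal.ofReal (Real.exp (-θ * σ)) := by
  obtain rfl : β = effectiveCapacity μ (s 0) θ := by
    rw [hβ, show S 1 = s 0 from funext fun ω => by simp [hS]]; rfl
  set φ : ℝ → ℝ := fun x => Real.exp (θ * (effectiveCapacity μ (s 0) θ - x))
  have hφ : Measurable φ := by fun_prop
  have hφ_ident i : IdentDistrib (φ ∘ s i) (φ ∘ s 0) μ μ := (hs_ident i).comp hφ
  have hφ_int i : Integrable (φ ∘ s i) μ :=
    (hφ_ident i).integrable_iff.2 (integrable_exp_mul_sub hs_int _)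
  have hφ_mean i : μ[φ ∘ s i] = 1 := by
    rw [(hφ_ident i).integral_eq]
    exact integral_exp_mul_effectiveCapacity_sub hθ.ne' hs_int
  have hville := (hs_indep.comp (fun _ => φ) fun _ => hφ).measure_le_sup'_prod_range_le
    (fun i => hφ.comp (hs_meas i)) hφ_int hφ_mean (fun _ _ => (Real.exp_pos _).le)
    (Real.exp_pos (θ * σ)) t
  rw [← Real.exp_neg, ← neg_mul] at hville
  refine (measure_mono fun ω (hω : σ < _) => ?_).trans hville
  obtain ⟨k, hk, hσk⟩ := exists_lt_succ_of_lt_sup'_range (h := hω) (by simp [hS, hσ])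
  refine le_sup'_of_le (fun k => (∏ j ∈ range (k + 1), φ ∘ s j) ω) (b := k) (mem_range.2 (by omega)) ?_
  simp only [prod_apply, Function.comp_apply, φ, prod_range_exp_mul_sub, ← hS, Real.exp_le_exp]
  exact mul_le_mul_of_nonneg_left hσk.le hθ.le
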